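/- For each face F of the reduced no broken circuit complex, the set of faces G of the extended no broken circuit complex whose intersection with {y_1,...,y_n} is exactly {y_i : i ∈ F} forms the Boolean interval [{y_i : i ∈ F}, F̄]; consequently these intervals partition the faces of Δ^ENBC_{M,≺}. -/

import Mathlib

/-
`i ∈ L(F) \ F` says that `i` is not in the closure of `(i↑ \ {i}) ∪ F`, a condition that only
gets harder as `F` grows, so `L(F) \ F` shrinks as `F` grows. Hence if a face `G` of the
extended complex lies in `F̄'` and its `y`-vertices other than `y₀` are those of `F ⊆ F'`, then
its `x`-vertices lie in `L(F') \ F' ⊆ L(F) \ F`, i.e. `G ⊆ F̄`. So `G` determines `F` (read off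
its `y`-vertices) and lies in the interval `[{y_i : i ∈ F}, F̄]`; conversely everything in that
interval is a face with exactly these `y`-vertices.
-/

open Set

/-- A circuit of a matroid: a minimal dependent set. -/
def Matroid.IsCircuit' {α : Type*} (M : Matroid α) (C : Set α) : Prop :=
  M.Dep C ∧ ∀ D ⊂ C, M.Indep D

/-- A broken circuit: a circuit with its least element (in the natural order) removed. -/
def Matroid.IsBrokenCircuit {n : ℕ} (M : Matroid (Fin (n + 1))) (B : Set (Fin (n + 1))) : Prop :=
  ∃ C m, M.IsCircuit' C ∧ m ∈ C ∧ (∀ k ∈ C, m ≤ k) ∧ B = C \ {m}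

/-- The rank of a set in a matroid: the largest size of an independent subset. -/
noncomputable def Matroid.rk' {α : Type*} (M : Matroid α) (S : Set α) : ℕ :=
  sSup {k | ∃ I, I ⊆ S ∧ M.Indep I ∧ I.ncard = k}

/-- A face of the reduced no broken circuit complex: a subset of `{1,…,n}` containing
no broken circuit (such a set is automatically independent). -/
def RNBCface {n : ℕ} (M : Matroid (Fin (n + 1))) (F : Set (Fin (n + 1))) : Prop :=
  (0 : Fin (n + 1)) ∉ F ∧ (∀ B, M.IsBrokenCircuit B → ¬ B ⊆ F) ∧ M.Indep F

/-- The up-set `i↑` of `i` with respect to a second linear order `≺` (including `i` itself). -/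
def upSet {n : ℕ} (prec : LinearOrder (Fin (n + 1))) (i : Fin (n + 1)) : Set (Fin (n + 1)) :=
  {j | prec.le i j}

/-- `L(F)`: the candidate `≺`-lexicographically maximal basis containing `F`, defined by
`i ∈ L(F)` iff `i ∈ F` or `rk(i↑ ∪ F) > rk((i↑ \ {i}) ∪ F)`. -/
noncomputable def LSet {n : ℕ} (M : Matroid (Fin (n + 1))) (prec : LinearOrder (Fin (n + 1)))
    (F : Set (Fin (n + 1))) : Set (Fin (n + 1)) :=
  {i | i ∈ F ∨ M.rk' (upSet prec i ∪ F) > M.rk' ((upSet prec i \ {i}) ∪ F)}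

/-- The facet `F̄` of the extended no broken circuit complex attached to a face `F` of the
reduced no broken circuit complex:  `{y_i : i ∈ F} ∪ {x_j : j ∈ L(F) \ F} ∪ {y_0}`,
with `x`-vertices encoded by `Sum.inl` and `y`-vertices by `Sum.inr`. -/
noncomputable def barFace {n : ℕ} (M : Matroid (Fin (n + 1))) (prec : LinearOrder (Fin (n + 1)))
    (F : Set (Fin (n + 1))) : Set (Fin (n + 1) ⊕ Fin (n + 1)) :=
  (Sum.inr '' F) ∪ (Sum.inl '' (LSet M prec F \ F)) ∪ {Sum.inr 0}

/-- A face of the extended no broken circuit complex `Δ^ENBC_{M,≺}`: a subset of some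
facet `F̄`. -/
noncomputable def ENBCface {n : ℕ} (M : Matroid (Fin (n + 1))) (prec : LinearOrder (Fin (n + 1)))
    (G : Set (Fin (n + 1) ⊕ Fin (n + 1))) : Prop :=
  ∃ F, RNBCface M F ∧ G ⊆ barFace M prec F

namespace Matroid

variable {α : Type*} {M : Matroid α} {I X : Set α} {e : α}

lemma rk'_eq_ncard_of_isBasis' [M.RankFinite] (hI : M.IsBasis' I X) : M.rk' X = I.ncard := by
  refine IsGreatest.csSup_eq ⟨⟨I, hI.subset, hI.indep, rfl⟩, ?_⟩
  rintro k ⟨J, hJX, hJ, rfl⟩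
  have hJI : J.encard ≤ I.encard := hI.eRk_eq_encard ▸ hJ.encard_le_eRk_of_subset hJX
  exact ENat.toNat_le_toNat hJI hI.indep.finite.encard_lt_top.ne

lemma cast_rk'_eq_eRk [M.RankFinite] (X : Set α) : (M.rk' X : ℕ∞) = M.eRk X := by
  obtain ⟨I, hI⟩ := M.exists_isBasis' X
  rw [rk'_eq_ncard_of_isBasis' hI, hI.eRk_eq_encard, hI.indep.finite.cast_ncard_eq]

lemma rk'_lt_rk'_insert_iff [M.RankFinite] (he : e ∈ M.E) :
    M.rk' X < M.rk' (insert e X) ↔ e ∉ M.closure X := by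
  rw [← Nat.cast_lt (α := ℕ∞), cast_rk'_eq_eRk, cast_rk'_eq_eRk]
  by_cases hcl : e ∈ M.closure X
  · rw [← eRk_closure_eq M (insert e X), closure_insert_eq_of_mem_closure hcl, eRk_closure_eq]
    simp [hcl]
  · rw [eRk_insert_eq_add_one ⟨he, hcl⟩, ← cast_rk'_eq_eRk]
    simpa [hcl] using (ENat.lt_add_one_iff (ENat.natCast_ne_top (M.rk' X))).2 le_rfl

end Matroid

variable {n : ℕ} {M : Matroid (Fin (n + 1))} {prec : LinearOrder (Fin (n + 1))}
  {F F' : Set (Fin (n + 1))} {G : Set (Fin (n + 1) ⊕ Fin (n + 1))} {i b : Fin (n + 1)}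

lemma insert_upSet_diff_singleton (prec : LinearOrder (Fin (n + 1))) (i : Fin (n + 1)) :
    insert i (upSet prec i \ {i}) = upSet prec i :=
  insert_sdiff_singleton.trans (insert_eq_of_mem (prec.le_refl i))

lemma mem_LSet_iff_notMem_closure (hE : M.E = univ) (hiF : i ∉ F) :
    i ∈ LSet M prec F ↔ i ∉ M.closure ((upSet prec i \ {i}) ∪ F) := by
  have hup : upSet prec i ∪ F = insert i ((upSet prec i \ {i}) ∪ F) := by
    rw [← insert_union, insert_upSet_diff_singleton]
  simp only [LSet, mem_ofPred_eq, hiF, false_or, gt_iff_lt, hup]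
  exact M.rk'_lt_rk'_insert_iff (hE ▸ mem_univ i)

lemma LSet_diff_subset_LSet_diff (hE : M.E = univ) (hFF' : F ⊆ F') :
    LSet M prec F' \ F' ⊆ LSet M prec F \ F := by
  rintro i ⟨hi, hiF'⟩
  have hiF : i ∉ F := fun h => hiF' (hFF' h)
  refine ⟨(mem_LSet_iff_notMem_closure hE hiF).2 fun hcl => ?_, hiF⟩
  exact (mem_LSet_iff_notMem_closure hE hiF').1 hi
    (M.closure_subset_closure (union_subset_union_right _ hFF') hcl)

lemma RNBCface.subset (hF' : RNBCface M F') (hFF' : F ⊆ F') : RNBCface M F :=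
  ⟨fun h => hF'.1 (hFF' h), fun B hB hBF => hF'.2.1 B hB (hBF.trans hFF'), hF'.2.2.subset hFF'⟩

lemma inr_mem_barFace_iff (hb : b ≠ 0) : Sum.inr b ∈ barFace M prec F ↔ b ∈ F := by
  simp [barFace, hb]

def yIndices (G : Set (Fin (n + 1) ⊕ Fin (n + 1))) : Set (Fin (n + 1)) :=
  {b | b ≠ 0 ∧ Sum.inr b ∈ G}

lemma inter_nonzero_inr_eq_image_iff :
    G ∩ {v | ∃ b : Fin (n + 1), b ≠ 0 ∧ v = Sum.inr b} = Sum.inr '' F ↔ yIndices G = F := by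
  constructor
  · intro h
    ext b
    simpa [yIndices, and_comm] using Set.ext_iff.1 h (Sum.inr b)
  · rintro rfl
    ext v
    rcases v with a | b <;> simp [yIndices, and_comm]

lemma yIndices_subset_of_subset_barFace (hG : G ⊆ barFace M prec F) : yIndices G ⊆ F :=
  fun _ hb => (inr_mem_barFace_iff hb.1).1 (hG hb.2)

lemma subset_barFace_of_yIndices_subset (hE : M.E = univ) (hFF' : F ⊆ F')
    (hG : G ⊆ barFace M prec F') (hGF : yIndices G ⊆ F) : G ⊆ barFace M prec F := by
  intro v hv
  rcases hG hv with (⟨b, -, rfl⟩ | ⟨j, hj, rfl⟩) | h0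
  · by_cases hb : b = 0
    · exact Or.inr (hb ▸ rfl)
    · exact Or.inl (Or.inl ⟨b, hGF ⟨hb, hv⟩, rfl⟩)
  · exact Or.inl (Or.inr ⟨j, LSet_diff_subset_LSet_diff hE hFF' hj, rfl⟩)
  · exact Or.inr h0

lemma ENBCface_and_yIndices_eq_iff (hE : M.E = univ) (hF : RNBCface M F) :
    ENBCface M prec G ∧ yIndices G = F ↔ Sum.inr '' F ⊆ G ∧ G ⊆ barFace M prec F := by
  constructor
  · rintro ⟨⟨F', -, hGF'⟩, rfl⟩
    exact ⟨image_subset_iff.2 fun _ hb => hb.2,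
      subset_barFace_of_yIndices_subset hE (yIndices_subset_of_subset_barFace hGF') hGF'
        subset_rfl⟩
  · rintro ⟨hFG, hGF⟩
    refine ⟨⟨F, hF, hGF⟩, (yIndices_subset_of_subset_barFace hGF).antisymm fun b hb => ?_⟩
    exact ⟨fun h => hF.1 (h ▸ hb), hFG (mem_image_of_mem _ hb)⟩

theorem ENBC_interval_partition_general {n : ℕ} (M : Matroid (Fin (n + 1)))
    (prec : LinearOrder (Fin (n + 1)))
    (hE : M.E = Set.univ) :
    (∀ F, RNBCface M F → ∀ G : Set (Fin (n + 1) ⊕ Fin (n + 1)),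
      (ENBCface M prec G ∧
        G ∩ {v | ∃ b : Fin (n + 1), b ≠ 0 ∧ v = Sum.inr b} = Sum.inr '' F)
        ↔ (Sum.inr '' F ⊆ G ∧ G ⊆ barFace M prec F)) ∧
    (∀ G : Set (Fin (n + 1) ⊕ Fin (n + 1)), ENBCface M prec G →
      ∃! F, RNBCface M F ∧ Sum.inr '' F ⊆ G ∧ G ⊆ barFace M prec F) := by
  refine ⟨fun F hF G => ?_, fun G hG => ?_⟩
  · rw [inter_nonzero_inr_eq_image_iff]
    exact ENBCface_and_yIndices_eq_iff hE hF
  obtain ⟨F', hF', hGF'⟩ := hG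
  have hF : RNBCface M (yIndices G) := hF'.subset (yIndices_subset_of_subset_barFace hGF')
  refine ⟨yIndices G, ⟨hF, (ENBCface_and_yIndices_eq_iff hE hF).1 ⟨⟨F', hF', hGF'⟩, rfl⟩⟩, ?_⟩
  rintro F₁ ⟨hF₁, hG₁⟩
  exact ((ENBCface_and_yIndices_eq_iff hE hF₁).2 hG₁).2.symm

/-- for each face `F` of the reduced no broken circuit complex, the faces `G`
of the extended complex whose set of `y`-vertices other than `y_0` is exactly
`{y_i : i ∈ F}` form the Boolean interval `[{y_i : i ∈ F}, F̄]`; consequently these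
intervals partition the faces of `Δ^ENBC_{M,≺}`. -/
theorem ENBC_interval_partition {n r : ℕ} (M : Matroid (Fin (n + 1)))
    (prec : LinearOrder (Fin (n + 1)))
    (hE : M.E = Set.univ)
    (hsimple : ∀ e f : Fin (n + 1), e ≠ f → M.Indep {e, f})
    (hloopless : ∀ e : Fin (n + 1), M.Indep {e})
    (hrank : ∀ B : Set (Fin (n + 1)), M.IsBase B → B.ncard = r + 1) :
    (∀ F, RNBCface M F → ∀ G : Set (Fin (n + 1) ⊕ Fin (n + 1)),
      (ENBCface M prec G ∧
        G ∩ {v | ∃ b : Fin (n + 1), b ≠ 0 ∧ v = Sum.inr b} = Sum.inr '' F)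
        ↔ (Sum.inr '' F ⊆ G ∧ G ⊆ barFace M prec F)) ∧
    (∀ G : Set (Fin (n + 1) ⊕ Fin (n + 1)), ENBCface M prec G →
      ∃! F, RNBCface M F ∧ Sum.inr '' F ⊆ G ∧ G ⊆ barFace M prec F) :=
  ENBC_interval_partition_general M prec hE
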